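/- Let a ∈ A and d ∈ M. The following are equivalent: (1) d − a ∈ G(d/A) and d ∉ A; (2) Δ(d − a) ∉ Δ(A). -/

import Mathlib

/-- `c` and `d` realize the same cut over the subgroup `A`. -/
def SameCut {M : Type*} [AddCommGroup M] [LinearOrder M] [IsOrderedAddMonoid M] (A : AddSubgroup M) (c d : M) : Prop :=
  ∀ a ∈ A, ((a ≤ c ↔ a ≤ d) ∧ (c ≤ a ↔ d ≤ a))

/-- `Stab(d/A)`: elements `a ∈ A` such that `d + a` and `d` realize the same cut over `A`. -/
def Stab {M : Type*} [AddCommGroup M] [LinearOrder M] [IsOrderedAddMonoid M] (A : AddSubgroup M) (d : M) : Set M :=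
  {a | a ∈ A ∧ SameCut A (d + a) d}

open Classical in
/-- `G(d/A)`. -/
def Gset {M : Type*} [AddCommGroup M] [LinearOrder M] [IsOrderedAddMonoid M] (A : AddSubgroup M) (d : M) : Set M :=
  if d ∈ A then ({0} : Set M)
  else {x | ∀ a ∈ A, a ∉ Stab A d → (-|a| < x ∧ x < |a|)}

/-- `H(d/A)`. -/
def Hset {M : Type*} [AddCommGroup M] [LinearOrder M] [IsOrderedAddMonoid M] (A : AddSubgroup M) (d : M) : Set M :=
  {x | ∃ a ∈ Stab A d, |x| ≤ |a|}

/-- `Δ(x) ≤ Δ(y)`: `|x| ≤ n • |y|` for some natural number `n`. -/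
def DeltaLe {M : Type*} [AddCommGroup M] [LinearOrder M] [IsOrderedAddMonoid M] (x y : M) : Prop :=
  ∃ n : ℕ, |x| ≤ n • |y|

/-- `Δ(x) = Δ(y)`. -/
def DeltaEq {M : Type*} [AddCommGroup M] [LinearOrder M] [IsOrderedAddMonoid M] (x y : M) : Prop :=
  DeltaLe x y ∧ DeltaLe y x

/-- `Δ(x) < Δ(y)`. -/
def DeltaLt {M : Type*} [AddCommGroup M] [LinearOrder M] [IsOrderedAddMonoid M] (x y : M) : Prop :=
  DeltaLe x y ∧ ¬ DeltaLe y x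

/-- `Δ(x) ∈ Δ(A)`. -/
def DeltaMem {M : Type*} [AddCommGroup M] [LinearOrder M] [IsOrderedAddMonoid M] (x : M) (A : AddSubgroup M) : Prop :=
  ∃ a ∈ A, DeltaEq x a

/-- `a` is a ramifier of `d` over `A`: `a ∈ A` and `Δ(d − a) ∉ Δ(A)`. -/
def IsRamifier {M : Type*} [AddCommGroup M] [LinearOrder M] [IsOrderedAddMonoid M] (A : AddSubgroup M) (d a : M) : Prop :=
  a ∈ A ∧ ¬ DeltaMem (d - a) A

/-- `d` is ramified over `A` if it admits a ramifier. -/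
def Ramified {M : Type*} [AddCommGroup M] [LinearOrder M] [IsOrderedAddMonoid M] (A : AddSubgroup M) (d : M) : Prop :=
  ∃ a, IsRamifier A d a

/-- `d` is cut-independent from `B` over `A`: every closed interval with bounds in `B`
containing `d` contains a point of `A`. -/
def CutIndep {M : Type*} [AddCommGroup M] [LinearOrder M] [IsOrderedAddMonoid M] (A B : AddSubgroup M) (d : M) : Prop :=
  ∀ b₁ ∈ B, ∀ b₂ ∈ B, b₁ ≤ d → d ≤ b₂ → ∃ a ∈ A, b₁ ≤ a ∧ a ≤ b₂

/-! If `Δ(d − a) = Δ(b)` with `b ∈ A`, divisibility of `A` yields `0 < b' ∈ A` with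
`b' ≤ |d − a| ≤ n • b'`. As `Stab(d/A)` is closed under addition, `b' ∈ Stab(d/A)` would make the
distinct points `d ∓ (n + 1) • b'` realize the same cut over `A`, although `a ∈ A` lies between
them; so `b'` bounds `G(d/A)`, contradicting `b' ≤ |d − a|`.
Conversely, if `Δ(d − a) ∉ Δ(A)` and `b ∈ A` has `|b| ≤ |d − a|`, then `2|b| ≤ |d − a|`, so any
`a' ∈ A` within `|b|` of `d` would give `Δ(a' − a) = Δ(d − a)`. Hence no point of `A` lies between
`d` and `d + b`, i.e. `b ∈ Stab(d/A)`. -/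

section

variable {M : Type*} [AddCommGroup M] [LinearOrder M] [IsOrderedAddMonoid M] {A : AddSubgroup M}

theorem SameCut.symm {c d : M} (h : SameCut A c d) : SameCut A d c :=
  fun a ha => ⟨(h a ha).1.symm, (h a ha).2.symm⟩

theorem SameCut.trans {c d e : M} (h₁ : SameCut A c d) (h₂ : SameCut A d e) : SameCut A c e :=
  fun a ha => ⟨(h₁ a ha).1.trans (h₂ a ha).1, (h₁ a ha).2.trans (h₂ a ha).2⟩

theorem SameCut.add_right {c d b : M} (h : SameCut A c d) (hb : b ∈ A) :
    SameCut A (c + b) (d + b) := by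
  intro a ha
  simpa only [sub_le_iff_le_add, le_sub_iff_add_le] using h (a - b) (A.sub_mem ha hb)

theorem SameCut.eq_of_le_of_le {c d a : M} (h : SameCut A c d) (ha : a ∈ A)
    (hca : c ≤ a) (had : a ≤ d) : c = d :=
  le_antisymm (hca.trans had) (((h a ha).2.1 hca).trans ((h a ha).1.2 had))

theorem sameCut_of_forall_notMem_uIcc {c d : M} (h : ∀ a ∈ A, a ∉ Set.uIcc c d) :
    SameCut A c d := by
  intro a ha
  have hout := h a ha
  simp only [Set.mem_uIcc, not_or, not_and_or, not_le] at hout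
  obtain ⟨h₁ | h₁, h₂ | h₂⟩ := hout <;> constructor <;> constructor <;> intro <;> order

theorem add_mem_Stab {d b₁ b₂ : M} (h₁ : b₁ ∈ Stab A d) (h₂ : b₂ ∈ Stab A d) :
    b₁ + b₂ ∈ Stab A d :=
  ⟨A.add_mem h₁.1 h₂.1, by simpa only [add_assoc] using (h₁.2.add_right h₂.1).trans h₂.2⟩

theorem succ_nsmul_mem_Stab {d b : M} (h : b ∈ Stab A d) (n : ℕ) : (n + 1) • b ∈ Stab A d := by
  induction n with
  | zero => simpa using h
  | succ n ih => simpa only [succ_nsmul] using add_mem_Stab ih h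

theorem notMem_Stab_of_abs_sub_le_nsmul {d a b : M} (ha : a ∈ A) (hb : 0 < b) {n : ℕ}
    (hn : |d - a| ≤ n • b) : b ∉ Stab A d := by
  intro hS
  set k := (n + 1) • b
  have hk : k ∈ Stab A d := succ_nsmul_mem_Stab hS n
  have hdown : SameCut A d (d - k) := by
    simpa [sub_eq_add_neg] using hk.2.add_right (A.neg_mem hk.1)
  have hnk : n • b < k := by simp only [k, succ_nsmul]; exact lt_add_of_pos_right _ hb
  obtain ⟨hlo, hhi⟩ := abs_le.1 (hn.trans hnk.le)
  have heq : d - k = d + k :=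
    (hdown.symm.trans hk.2.symm).eq_of_le_of_le ha (sub_le_comm.1 hhi) (neg_le_sub_iff_le_add.1 hlo)
  rw [sub_eq_add_neg, add_right_inj] at heq
  exact (neg_lt_self (nsmul_pos hb n.succ_ne_zero)).ne heq

theorem mem_Gset_iff {d x : M} (hd : d ∉ A) :
    x ∈ Gset A d ↔ ∀ b ∈ A, b ∉ Stab A d → |x| < |b| := by
  simp only [Gset, if_neg hd, Set.mem_ofPred_eq, abs_lt]

theorem DeltaMem.exists_pos_le_abs_le_nsmul (hAdiv : ∀ a ∈ A, ∀ n : ℕ, 0 < n → ∃ b ∈ A, n • b = a)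
    {x : M} (h : DeltaMem x A) (hx : x ≠ 0) :
    ∃ b ∈ A, 0 < b ∧ b ≤ |x| ∧ ∃ n : ℕ, |x| ≤ n • b := by
  obtain ⟨b, hbA, ⟨n, hxb⟩, ⟨m, hbx⟩⟩ := h
  have hb : 0 < |b| := by
    by_contra! hb
    exact (abs_pos.2 hx).not_ge (hxb.trans (nsmul_nonpos hb n))
  have hm : m ≠ 0 := by
    rintro rfl
    exact hb.not_ge (by simpa using hbx)
  obtain ⟨b', hb'A, hb'⟩ := hAdiv |b| (abs_mem_iff.2 hbA) m (Nat.pos_of_ne_zero hm)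
  rw [← hb'] at hb hbx hxb
  exact ⟨b', hb'A, (nsmul_pos_iff hm).1 hb, (nsmul_le_nsmul_iff_right hm).1 hbx, n * m,
    by rwa [mul_nsmul']⟩

theorem deltaEq_of_two_nsmul_abs_sub_le {x y : M} (h : 2 • |x - y| ≤ |x|) : DeltaEq x y := by
  rw [two_nsmul] at h
  have hx : |x| ≤ |x - y| + |y| := sub_le_iff_le_add.1 (abs_sub_abs_le_abs_sub x y)
  have hy : |y| ≤ |x - y| + |x| := by
    simpa [abs_sub_comm] using sub_le_iff_le_add.1 (abs_sub_abs_le_abs_sub y x)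
  have hsub_y : |x - y| ≤ |y| := le_of_add_le_add_left (h.trans hx)
  have hsub_x : |x - y| ≤ |x| := (le_add_of_nonneg_left (abs_nonneg _)).trans h
  refine ⟨⟨2, ?_⟩, ⟨2, ?_⟩⟩ <;> rw [two_nsmul]
  · exact hx.trans (add_le_add hsub_y le_rfl)
  · exact hy.trans (add_le_add hsub_x le_rfl)

theorem mem_Stab_of_abs_le_abs_sub {d a b : M} (ha : a ∈ A) (hΔ : ¬ DeltaMem (d - a) A)
    (hb : b ∈ A) (hba : |b| ≤ |d - a|) : b ∈ Stab A d := by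
  have h2b : 2 • |b| ≤ |d - a| := by
    by_contra! h
    exact hΔ ⟨b, hb, ⟨2, h.le⟩, ⟨1, by simpa using hba⟩⟩
  refine ⟨hb, sameCut_of_forall_notMem_uIcc fun a' ha' hmem => hΔ ⟨a' - a, A.sub_mem ha' ha,
    deltaEq_of_two_nsmul_abs_sub_le ?_⟩⟩
  have hclose : |d - a'| ≤ |b| := by simpa using Set.abs_sub_right_of_mem_uIcc hmem
  calc 2 • |d - a - (a' - a)| = 2 • |d - a'| := by rw [sub_sub_sub_cancel_right]
    _ ≤ 2 • |b| := nsmul_le_nsmul_right hclose 2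
    _ ≤ |d - a| := h2b

theorem not_deltaMem_sub_of_sub_mem_Gset
    (hAdiv : ∀ a ∈ A, ∀ n : ℕ, 0 < n → ∃ b ∈ A, n • b = a)
    {a d : M} (ha : a ∈ A) (hd : d ∉ A) (hG : d - a ∈ Gset A d) : ¬ DeltaMem (d - a) A := by
  intro hΔ
  have hx : d - a ≠ 0 := fun h => hd (sub_eq_zero.1 h ▸ ha)
  obtain ⟨b, hbA, hb, hble, n, hn⟩ := hΔ.exists_pos_le_abs_le_nsmul hAdiv hx
  have hlt := (mem_Gset_iff hd).1 hG b hbA (notMem_Stab_of_abs_sub_le_nsmul ha hb hn)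
  exact (abs_of_pos hb ▸ hlt).not_ge hble

end

theorem sub_mem_Gset_iff_delta_not_mem_general (M : Type*) [AddCommGroup M] [LinearOrder M] [IsOrderedAddMonoid M]
    (A : AddSubgroup M)
    (hAdiv : ∀ a ∈ A, ∀ n : ℕ, 0 < n → ∃ b ∈ A, n • b = a)
    (a : M) (ha : a ∈ A) (d : M) :
    (d - a ∈ Gset A d ∧ d ∉ A) ↔ ¬ DeltaMem (d - a) A := by
  constructor
  · rintro ⟨hG, hd⟩
    exact not_deltaMem_sub_of_sub_mem_Gset hAdiv ha hd hG
  · intro hΔ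
    have hd : d ∉ A := fun hd => hΔ ⟨d - a, A.sub_mem hd ha, ⟨1, by simp⟩, ⟨1, by simp⟩⟩
    refine ⟨(mem_Gset_iff hd).2 fun b hb hbS => ?_, hd⟩
    by_contra! hle
    exact hbS (mem_Stab_of_abs_le_abs_sub ha hΔ hb hle)

/-- For `a ∈ A` and `d ∈ M`: `d − a ∈ G(d/A)` and `d ∉ A`, if and only if
`Δ(d − a) ∉ Δ(A)`. -/
theorem sub_mem_Gset_iff_delta_not_mem (M : Type*) [AddCommGroup M] [LinearOrder M] [IsOrderedAddMonoid M]
    (hMdiv : ∀ x : M, ∀ n : ℕ, 0 < n → ∃ y : M, n • y = x)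
    (A : AddSubgroup M)
    (hAdiv : ∀ a ∈ A, ∀ n : ℕ, 0 < n → ∃ b ∈ A, n • b = a)
    (a : M) (ha : a ∈ A) (d : M) :
    (d - a ∈ Gset A d ∧ d ∉ A) ↔ ¬ DeltaMem (d - a) A :=
  sub_mem_Gset_iff_delta_not_mem_general M A hAdiv a ha d
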